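/- Let q ≥ 2 and H(z) a Laurent polynomial vector, and suppose m(z) is a Laurent polynomial with |m(z)|² = 2 − H*(z)H(z) for all z ∈ 𝕋ⁿ. Then the matrix [m(z)H(z), I − H(z)H*(z)] is paraunitary, i.e., [m(z)H(z), I − H(z)H*(z)] · [m(z)H(z), I − H(z)H*(z)]* = I for all z ∈ 𝕋ⁿ. -/

import Mathlib

/-! Splitting `Φ = [m H, I − H H*]` into its first column and the rest gives
`Φ Φ* = |m|² H H* + (I − H H*)²`, and `(I − H H*)² = I − (2 − H* H) H H*`;
the hypothesis makes the two rank-one terms cancel. -/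

open Matrix Complex

/-- The scaled LP² matrix `[m H, I − H H*]` built from the values `h = H(z)`
and `m = m(z)` at a point `z ∈ 𝕋ⁿ` (on the torus conjugation implements
the substitution `z ↦ z⁻¹` for real-coefficient Laurent polynomials). -/
noncomputable def ScaledPhi {q : ℕ} (m : ℂ) (h : Fin q → ℂ) :
    Matrix (Fin q) (Fin (q + 1)) ℂ :=
  Matrix.of fun i j =>
    if hj : j = 0 then m * h i
    else (if i = j.pred hj then (1 : ℂ) else 0) - h i * (starRingEnd ℂ) (h (j.pred hj))

namespace Matrix

variable {m α : Type*}

theorem mul_conjTranspose_fin_succ {n : ℕ} [NonUnitalSemiring α] [StarRing α]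
    (A : Matrix m (Fin (n + 1)) α) :
    A * Aᴴ = vecMulVec (A.col 0) (star (A.col 0)) +
      A.submatrix id Fin.succ * (A.submatrix id Fin.succ)ᴴ := by
  ext i k
  simp [mul_apply, Fin.sum_univ_succ, vecMulVec_apply]

theorem one_sub_vecMulVec_star_mul_conjTranspose [Fintype m] [DecidableEq m] [CommRing α]
    [StarRing α] (h : m → α) :
    (1 - vecMulVec h (star h)) * (1 - vecMulVec h (star h))ᴴ =
      1 - (2 - star h ⬝ᵥ h) • vecMulVec h (star h) := by
  rw [conjTranspose_sub, conjTranspose_one, conjTranspose_vecMulVec, star_star, sub_mul,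
    mul_sub, mul_sub, vecMulVec_mul_vecMulVec, vecMulVec_smul]
  simp only [one_mul, mul_one, sub_smul, two_smul]
  abel

end Matrix

theorem scaledPhi_col_zero {q : ℕ} (m : ℂ) (h : Fin q → ℂ) :
    (ScaledPhi m h).col 0 = m • h := by
  ext i
  simp [ScaledPhi, Matrix.col]

theorem scaledPhi_submatrix_succ {q : ℕ} (m : ℂ) (h : Fin q → ℂ) :
    (ScaledPhi m h).submatrix id Fin.succ = 1 - vecMulVec h (star h) := by
  ext i j
  simp [ScaledPhi, Matrix.one_apply, vecMulVec_apply]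

theorem scaled_lp2_paraunitary_general (q : ℕ) (h : Fin q → ℂ) (m : ℂ)
    (hm : m * (starRingEnd ℂ) m = 2 - ∑ j, h j * (starRingEnd ℂ) (h j)) :
    ScaledPhi m h * (ScaledPhi m h)ᴴ = 1 := by
  have hm_dot : m * star m = 2 - star h ⬝ᵥ h := by
    simpa [dotProduct, mul_comm] using hm
  rw [mul_conjTranspose_fin_succ, scaledPhi_col_zero, scaledPhi_submatrix_succ,
    one_sub_vecMulVec_star_mul_conjTranspose, star_smul, smul_vecMulVec, vecMulVec_smul,
    smul_smul, hm_dot]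
  abel

/-- if `|m(z)|² = 2 − H*(z)H(z)` on `𝕋ⁿ`, then the matrix
`[m(z)H(z), I − H(z)H*(z)]` is paraunitary:
`[mH, I − HH*] ⋅ [mH, I − HH*]* = I`. -/
theorem scaled_lp2_paraunitary (q : ℕ) (hq : 2 ≤ q) (h : Fin q → ℂ) (m : ℂ)
    (hm : m * (starRingEnd ℂ) m = 2 - ∑ j, h j * (starRingEnd ℂ) (h j)) :
    ScaledPhi m h * (ScaledPhi m h)ᴴ = 1 :=
  scaled_lp2_paraunitary_general q h m hm
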